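/- Let n ≥ 3 be an odd integer and let 𝒫_n(x) = Σ_{j=0}^{n−1} d_{n,j} x^j with d_{n,j} = C(n−1,j)^2 + C(n−1,j+1)·C(n−1,j−1). Then 𝒫_n has n−1 real simple zeros, 𝒫_n(−1) ≠ 0, and, writing w_1 < ⋯ < w_n for the ascending arrangement of −1 together with the zeros of 𝒫_n and u_1 < ⋯ < u_{n−1} for the zeros of 𝒩_n, one has w_1 < u_1 < w_2 < u_2 < ⋯ < u_{n−1} < w_n, i.e. (x+1)𝒫_n(x) ≺ 𝒩_n(x). -/

import Mathlib

/-!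
Let `𝒩 = 𝒩_n`, `𝒫 = 𝒫_n` and `Q = (x + 1) 𝒫`. Comparing coefficients gives the identity
`(x - 1) 𝒫 = ((2n - 1) x - 1) 𝒩 - 2 x (x + 1) 𝒩'`, so at a zero `u` of `𝒩` we get
`(1 - u) Q(u) = 2 u (u + 1)² 𝒩'(u)`. The zeros of `𝒩` are negative, and for odd `n = 2m + 1`
none of them is `-1`, because `n 𝒩(-1) = (-1)^m C(n, m)` (the coefficient of `x^(n-1)` in
`(1 + x)^n (1 - x)^n = (1 - x²)^n`). Hence `Q` has the sign of `-𝒩'` at every zero of `𝒩`; these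
signs alternate, and as `Q` is monic of degree `n` it also changes sign below the smallest and
above the largest zero of `𝒩`. This accounts for all `n` zeros of `Q`, which therefore
interlace with those of `𝒩`.
-/

open Polynomial

/-- The Narayana numbers `c_{n,k} = (1/n) C(n,k) C(n,k−1)` (for `1 ≤ k ≤ n`). -/
noncomputable def narayanaNum (n k : ℕ) : ℝ :=
  (n.choose k : ℝ) * (n.choose (k - 1) : ℝ) / (n : ℝ)

/-- The reduced Narayana polynomial `𝒩_n(x) = N_n(x)/x = Σ_{j=0}^{n−1} c_{n,j+1} x^j`. -/
noncomputable def redNarayana (n : ℕ) : Polynomial ℝ :=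
  ∑ j ∈ Finset.range n, Polynomial.C (narayanaNum n (j + 1)) * Polynomial.X ^ j

/-- The coefficients `d_{n,j} = C(n−1,j)² + C(n−1,j+1)·C(n−1,j−1)`, with out-of-range
binomial entries equal to `0` (in particular the `j−1` entry vanishes for `j = 0`). -/
noncomputable def narayanaD (n j : ℕ) : ℝ :=
  ((n - 1).choose j : ℝ) ^ 2 +
    ((n - 1).choose (j + 1) : ℝ) * (if j = 0 then 0 else ((n - 1).choose (j - 1) : ℝ))

/-- The polynomial `𝒫_n(x) = Σ_{j=0}^{n−1} d_{n,j} x^j`. -/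
noncomputable def narayanaP (n : ℕ) : Polynomial ℝ :=
  ∑ j ∈ Finset.range n, Polynomial.C (narayanaD n j) * Polynomial.X ^ j

open Finset Lagrange

theorem Finset.exists_strictMonoOn_enum {α : Type*} [LinearOrder α] [Inhabited α]
    (S : Finset α) {k : ℕ} (hS : #S = k) :
    ∃ s : ℕ → α, StrictMonoOn s (Set.Iio k) ∧ ∀ r, r ∈ S ↔ ∃ i < k, s i = r := by
  refine ⟨fun i => if h : i < k then S.orderEmbOfFin hS ⟨i, h⟩ else default, ?_, fun r => ?_⟩
  · intro i (hi : i < k) j (hj : j < k) hij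
    simp only [dif_pos hi, dif_pos hj]
    exact (S.orderEmbOfFin hS).strictMono hij
  · rw [← Finset.mem_coe, ← S.range_orderEmbOfFin hS, Set.mem_range]
    constructor
    · rintro ⟨i, rfl⟩
      exact ⟨i, i.2, by simp⟩
    · rintro ⟨i, hi, rfl⟩
      exact ⟨⟨i, hi⟩, by simp [hi]⟩

theorem StrictMonoOn.exists_enum_erase {α : Type*} [LinearOrder α] [Inhabited α] {w : ℕ → α}
    {M : ℕ} (hw : StrictMonoOn w (Set.Iio (M + 1))) {a : α} (ha : ∃ k < M + 1, w k = a) :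
    ∃ s : ℕ → α, StrictMonoOn s (Set.Iio M) ∧
      ∀ r, (r ≠ a ∧ ∃ k < M + 1, w k = r) ↔ ∃ i < M, s i = r := by
  set S := ((range (M + 1)).image w).erase a
  have hS : #S = M := by
    rw [card_erase_of_mem (by simpa using ha), card_image_of_injOn (hw.injOn.mono (by simp)),
      card_range, Nat.add_sub_cancel]
  obtain ⟨s, hs_mono, hs_mem⟩ := S.exists_strictMonoOn_enum hS
  exact ⟨s, hs_mono, fun r => by rw [← hs_mem]; simp [S]⟩

namespace Polynomial

theorem exists_mem_Ioo_eval_eq_zero (p : ℝ[X]) {a b : ℝ} (hab : a ≤ b)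
    (h : p.eval a * p.eval b < 0) : ∃ c ∈ Set.Ioo a b, p.eval c = 0 := by
  have hcont := p.continuous.continuousOn (s := Set.Icc a b)
  rcases mul_neg_iff.mp h with ⟨ha, hb⟩ | ⟨ha, hb⟩
  · exact intermediate_value_Ioo' hab hcont ⟨hb, ha⟩
  · exact intermediate_value_Ioo hab hcont ⟨ha, hb⟩

theorem exists_gt_eval_pos {p : ℝ[X]} (hdeg : 0 < p.degree) (hlc : 0 < p.leadingCoeff) (x : ℝ) :
    ∃ y, x < y ∧ 0 < p.eval y :=
  (((p.tendsto_atTop_of_leadingCoeff_nonneg hdeg hlc.le).eventually_gt_atTop 0).and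
    (Filter.eventually_gt_atTop x)).exists.imp fun _ h => h.symm

theorem exists_lt_neg_one_pow_mul_eval_pos {p : ℝ[X]} (hdeg : 0 < p.degree)
    (hlc : 0 < p.leadingCoeff) (x : ℝ) :
    ∃ y, y < x ∧ 0 < (-1) ^ p.natDegree * p.eval y := by
  set q := C ((-1) ^ p.natDegree) * p.comp (-X)
  have hdeg_q : q.degree = p.degree := by simp [q]
  have hlc_q : q.leadingCoeff = p.leadingCoeff := by
    simp [q, ← mul_assoc, ← mul_pow]
  obtain ⟨y, hxy, hy⟩ := exists_gt_eval_pos (hdeg_q ▸ hdeg) (hlc_q ▸ hlc) (-x)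
  exact ⟨-y, by linarith, by simpa [q] using hy⟩

theorem exists_roots_of_sign_changes {Q : ℝ[X]} (hQ : Q ≠ 0) {M : ℕ} (hdeg : Q.natDegree ≤ M)
    {v : ℕ → ℝ} (hv : ∀ k < M, v k < v (k + 1))
    (hsign : ∀ k ≤ M, 0 < (-1) ^ (M - k) * Q.eval (v k)) :
    ∃ w : ℕ → ℝ, StrictMonoOn w (Set.Iio M) ∧ (∀ k < M, v k < w k ∧ w k < v (k + 1)) ∧
      ∀ r, Q.eval r = 0 ↔ ∃ k < M, w k = r := by
  have hchange : ∀ k < M, ∃ c ∈ Set.Ioo (v k) (v (k + 1)), Q.eval c = 0 := by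
    intro k hk
    refine Q.exists_mem_Ioo_eval_eq_zero (hv k hk).le ?_
    have h₁ := hsign k hk.le
    have h₂ := hsign (k + 1) hk
    rw [show M - k = M - (k + 1) + 1 by omega, pow_succ] at h₁
    have hsq : (-1 : ℝ) ^ (M - (k + 1)) * (-1) ^ (M - (k + 1)) = 1 := by rw [← mul_pow]; norm_num
    nlinarith [mul_pos h₁ h₂]
  choose! w hw_mem hw_root using hchange
  have hw_mono : StrictMonoOn w (Set.Iio M) :=
    strictMonoOn_of_lt_add_one Set.ordConnected_Iio fun k _ _ (hk : k + 1 < M) =>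
      (hw_mem k (by omega)).2.trans (hw_mem (k + 1) hk).1
  have himage : (range M).image w = Q.roots.toFinset := by
    refine eq_of_subset_of_card_le (fun r hr => ?_) ?_
    · obtain ⟨k, hk, rfl⟩ := mem_image.mp hr
      exact Multiset.mem_toFinset.mpr ((mem_roots hQ).mpr (hw_root k (mem_range.mp hk)))
    · rw [card_image_of_injOn (hw_mono.injOn.mono (by simp)), card_range]
      exact (Multiset.toFinset_card_le _).trans ((card_roots' Q).trans hdeg)
  refine ⟨w, hw_mono, fun k hk => hw_mem k hk, fun r => ?_⟩
  rw [← IsRoot.def, ← mem_roots hQ, ← Multiset.mem_toFinset, ← himage]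
  simp

theorem exists_interlacing_roots {Q : ℝ[X]} {N : ℕ} (hdeg : Q.natDegree = N + 1)
    (hlc : 0 < Q.leadingCoeff) {u : ℕ → ℝ} (hu : StrictMonoOn u (Set.Iio N))
    (hsign : ∀ i < N, 0 < (-1) ^ (N - i) * Q.eval (u i)) :
    ∃ w : ℕ → ℝ, StrictMonoOn w (Set.Iio (N + 1)) ∧
      (∀ r, Q.eval r = 0 ↔ ∃ k < N + 1, w k = r) ∧ ∀ i < N, w i < u i ∧ u i < w (i + 1) := by
  have hQ : Q ≠ 0 := leadingCoeff_ne_zero.mp hlc.ne'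
  have hdeg_pos : 0 < Q.degree := by
    rw [degree_eq_natDegree hQ, hdeg]; exact_mod_cast N.succ_pos
  obtain ⟨L, hL, hL_sign⟩ := exists_lt_neg_one_pow_mul_eval_pos hdeg_pos hlc (u 0)
  obtain ⟨R, hR, hR_sign⟩ := exists_gt_eval_pos hdeg_pos hlc (u (N - 1))
  set v : ℕ → ℝ := fun k => if k = 0 then L else if k ≤ N then u (k - 1) else R
  have hv_succ : ∀ i < N, v (i + 1) = u i := fun i hi => by simp [v, show i + 1 ≤ N by omega]
  obtain ⟨w, hw_mono, hw_mem, hw_roots⟩ := exists_roots_of_sign_changes hQ hdeg.le (v := v)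
    (fun k hk => by
      rcases Nat.eq_zero_or_pos k with rfl | hk₀
      · rcases Nat.eq_zero_or_pos N with rfl | hN
        · simpa [v] using hL.trans hR
        · simpa [v, hv_succ 0 hN] using hL
      · rcases Nat.lt_or_ge (k + 1) (N + 1) with hkN | hkN
        · rw [hv_succ k (by omega)]
          simp only [v, if_neg hk₀.ne', if_pos (show k ≤ N by omega)]
          exact hu (show k - 1 < N by omega) (show k < N by omega) (by omega)
        · obtain rfl : k = N := by omega
          simpa [v, hk₀.ne'] using hR)
    (fun k hk => by
      simp only [v]
      split_ifs with h₀ h₁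
      · subst h₀; rwa [Nat.sub_zero, ← hdeg]
      · rw [show N + 1 - k = N - (k - 1) by omega]; exact hsign _ (by omega)
      · rwa [show N + 1 - k = 0 by omega, pow_zero, one_mul])
  refine ⟨w, hw_mono, hw_roots, fun i hi => ?_⟩
  rw [← hv_succ i hi]
  exact ⟨(hw_mem i (by omega)).2, (hw_mem (i + 1) (by omega)).1⟩

theorem Monic.eq_nodal {R ι : Type*} [CommRing R] [IsDomain R] {g : R[X]} (hg : g.Monic)
    {s : Finset ι} {v : ι → R} (hdeg : g.natDegree = #s) (hv : Set.InjOn v s)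
    (hroot : ∀ i ∈ s, g.eval (v i) = 0) : g = nodal s v := by
  refine eq_of_degree_sub_lt_of_eval_index_eq s hv ?_ fun i hi => by
    rw [hroot i hi, eval_nodal_at_node hi]
  have hdeg' : g.degree = (nodal s v).degree := by
    rw [degree_nodal, degree_eq_natDegree hg.ne_zero, hdeg]
  calc (g - nodal s v).degree < g.degree :=
        degree_sub_lt_left hdeg' hg.ne_zero (by rw [hg.leadingCoeff, nodal_monic.leadingCoeff])
    _ = #s := by rw [hdeg', degree_nodal]

theorem coeff_one_sub_X_pow {R : Type*} [CommRing R] (n k : ℕ) :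
    ((1 - X : R[X]) ^ n).coeff k = (-1) ^ k * n.choose k := by
  rw [show (1 - X : R[X]) = C (-1) * X + 1 by simp; ring, add_pow]
  simp only [one_pow, mul_one, mul_pow, ← C_pow, finsetSum_coeff, ← C_eq_natCast, coeff_C_mul,
    coeff_mul_C, coeff_X_pow]
  simp +contextual [Nat.choose_eq_zero_of_lt]

theorem coeff_one_sub_X_sq_pow {R : Type*} [CommRing R] (n k : ℕ) :
    ((1 - X ^ 2 : R[X]) ^ n).coeff (2 * k) = (-1) ^ k * n.choose k := by
  rw [show (1 - X ^ 2 : R[X]) ^ n = expand R 2 ((1 - X) ^ n) by simp, coeff_expand two_pos,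
    if_pos (dvd_mul_right 2 k), Nat.mul_div_cancel_left k two_pos, coeff_one_sub_X_pow]

end Polynomial

theorem Lagrange.neg_one_pow_mul_eval_derivative_nodal_pos {N : ℕ} {u : ℕ → ℝ}
    (hu : StrictMonoOn u (Set.Iio N)) {i : ℕ} (hi : i < N) :
    0 < (-1) ^ (N - 1 - i) * (derivative (nodal (range N) u)).eval (u i) := by
  have hsplit : (range N).erase i = range i ∪ Ioo i N := by
    ext j; simp only [mem_erase, mem_range, mem_union, mem_Ioo]; omega
  have hdisj : Disjoint (range i) (Ioo i N) :=
    disjoint_left.mpr fun j hj hj' => by simp only [mem_range, mem_Ioo] at hj hj'; omega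
  have hlow : 0 < ∏ j ∈ range i, (u i - u j) := prod_pos fun j hj => by
    have hj := mem_range.mp hj
    linarith [hu (show j < N by omega) (show i < N from hi) hj]
  have hhigh : 0 < ∏ j ∈ Ioo i N, (u j - u i) := prod_pos fun j hj => by
    have hj := mem_Ioo.mp hj
    linarith [hu (show i < N from hi) (show j < N from hj.2) hj.1]
  have hflip : ∏ j ∈ Ioo i N, (u i - u j) = (-1) ^ (N - 1 - i) * ∏ j ∈ Ioo i N, (u j - u i) := by
    rw [show N - 1 - i = #(Ioo i N) by simp; omega, ← prod_neg]
    simp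
  have hsq : (-1 : ℝ) ^ (N - 1 - i) * (-1) ^ (N - 1 - i) = 1 := by rw [← mul_pow]; norm_num
  rw [eval_nodal_derivative_eval_node_eq (mem_range.mpr hi), eval_nodal, hsplit,
    prod_union hdisj, hflip]
  calc 0 < (∏ j ∈ range i, (u i - u j)) * ∏ j ∈ Ioo i N, (u j - u i) := mul_pos hlow hhigh
    _ = _ := by
      linear_combination -(∏ j ∈ range i, (u i - u j)) * (∏ j ∈ Ioo i N, (u j - u i)) * hsq

theorem Nat.cast_choose_succ_mul (N k : ℕ) :
    (N.choose (k + 1) : ℝ) * (k + 1) = N.choose k * (N - k) := by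
  rcases le_or_gt k N with h | h
  · have h' : ((N.choose (k + 1) * (k + 1) : ℕ) : ℝ) = ((N.choose k * (N - k) : ℕ) : ℝ) :=
      congrArg _ (Nat.choose_succ_right_eq N k)
    push_cast [Nat.cast_sub h] at h'
    exact h'
  · simp [Nat.choose_eq_zero_of_lt h, Nat.choose_eq_zero_of_lt (Nat.lt_succ_of_lt h)]

theorem Nat.succ_mul_choose_mul_choose_sub (N t : ℕ) :
    ((N : ℝ) + 1) * (N.choose (t + 1) * N.choose t - N.choose (t + 2) * N.choose (t + 1))
      = (2 * t + 2 - N) *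
          ((N.choose (t + 2) + N.choose (t + 1)) * (N.choose t + N.choose (t + 1))) := by
  have h₁ := Nat.cast_choose_succ_mul N t
  have h₂ := Nat.cast_choose_succ_mul N (t + 1)
  apply mul_left_cancel₀ (show (t : ℝ) + 1 ≠ 0 by positivity)
  push_cast at h₂
  linear_combination
    ((N - 2 * t - 2) * (N.choose (t + 1) : ℝ) - (2 * t + 3) * N.choose (t + 2)) * h₁
    - (N + 1) * (N.choose t : ℝ) * h₂

theorem coeff_redNarayana (n k : ℕ) : (redNarayana n).coeff k = narayanaNum n (k + 1) := by
  simp only [redNarayana, finsetSum_coeff, coeff_C_mul_X_pow, sum_ite_eq, mem_range,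
    ite_eq_left_iff, not_lt]
  intro hk
  simp [narayanaNum, Nat.choose_eq_zero_of_lt (Nat.lt_succ_of_le hk)]

theorem coeff_narayanaP {n : ℕ} (hn : 1 ≤ n) (k : ℕ) : (narayanaP n).coeff k = narayanaD n k := by
  simp only [narayanaP, finsetSum_coeff, coeff_C_mul_X_pow, sum_ite_eq, mem_range,
    ite_eq_left_iff, not_lt]
  intro hk
  simp [narayanaD, Nat.choose_eq_zero_of_lt (show n - 1 < k by omega),
    Nat.choose_eq_zero_of_lt (show n - 1 < k + 1 by omega)]

theorem natDegree_redNarayana_le (N : ℕ) : (redNarayana (N + 1)).natDegree ≤ N :=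
  natDegree_le_iff_coeff_eq_zero.mpr fun k hk => by
    rw [coeff_redNarayana]
    simp [narayanaNum, Nat.choose_eq_zero_of_lt (show N + 1 < k + 1 by omega)]

theorem coeff_redNarayana_self (N : ℕ) : (redNarayana (N + 1)).coeff N = 1 := by
  simp [coeff_redNarayana, narayanaNum, Nat.cast_add_one_ne_zero]

theorem natDegree_narayanaP_le (N : ℕ) : (narayanaP (N + 1)).natDegree ≤ N :=
  natDegree_le_iff_coeff_eq_zero.mpr fun k hk => by
    rw [coeff_narayanaP N.succ_pos]
    simp [narayanaD, Nat.choose_eq_zero_of_lt hk,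
      Nat.choose_eq_zero_of_lt (show N < k + 1 by omega)]

theorem coeff_narayanaP_self (N : ℕ) : (narayanaP (N + 1)).coeff N = 1 := by
  simp [coeff_narayanaP N.succ_pos, narayanaD]

theorem monic_redNarayana (N : ℕ) : (redNarayana (N + 1)).Monic :=
  monic_of_natDegree_le_of_coeff_eq_one N (natDegree_redNarayana_le N) (coeff_redNarayana_self N)

theorem natDegree_redNarayana (N : ℕ) : (redNarayana (N + 1)).natDegree = N :=
  natDegree_eq_of_le_of_coeff_ne_zero (natDegree_redNarayana_le N)
    (by simp [coeff_redNarayana_self])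

theorem monic_narayanaP (N : ℕ) : (narayanaP (N + 1)).Monic :=
  monic_of_natDegree_le_of_coeff_eq_one N (natDegree_narayanaP_le N) (coeff_narayanaP_self N)

theorem natDegree_narayanaP (N : ℕ) : (narayanaP (N + 1)).natDegree = N :=
  natDegree_eq_of_le_of_coeff_ne_zero (natDegree_narayanaP_le N) (by simp [coeff_narayanaP_self])

theorem narayanaD_sub_narayanaD_succ (N m : ℕ) :
    narayanaD (N + 1) m - narayanaD (N + 1) (m + 1) =
      (2 * N + 1 - 2 * m) * narayanaNum (N + 1) (m + 1)
        - (2 * m + 3) * narayanaNum (N + 1) (m + 1 + 1) := by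
  have pascal : ∀ k : ℕ, ((N + 1).choose (k + 1) : ℝ) = N.choose k + N.choose (k + 1) := by
    intro k; rw [Nat.choose_succ_succ]; push_cast; ring
  rcases m with _ | t
  · have h := Nat.cast_choose_succ_mul N 1
    simp only [narayanaNum, narayanaD, Nat.add_sub_cancel, pascal, Nat.choose_zero_right,
      Nat.choose_one_right, if_pos, if_neg one_ne_zero, zero_add, Nat.sub_self] at h ⊢
    field_simp
    push_cast at h ⊢
    linear_combination h
  · have h₁ := Nat.succ_mul_choose_mul_choose_sub N t
    have h₂ := Nat.succ_mul_choose_mul_choose_sub N (t + 1)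
    simp only [narayanaNum, narayanaD, Nat.add_sub_cancel, pascal,
      if_neg (Nat.succ_ne_zero _)] at h₁ h₂ ⊢
    field_simp
    push_cast at h₁ h₂ ⊢
    linear_combination -h₁ - h₂

theorem X_sub_one_mul_narayanaP (N : ℕ) :
    (X - 1) * narayanaP (N + 1) =
      (C (2 * N + 1 : ℝ) * X - 1) * redNarayana (N + 1)
        - 2 * X * (X + 1) * derivative (redNarayana (N + 1)) := by
  set f := redNarayana (N + 1)
  have hcoeff := narayanaD_sub_narayanaD_succ N
  rw [show (X - 1) * narayanaP (N + 1) = X * narayanaP (N + 1) - narayanaP (N + 1) by ring,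
    show (C (2 * N + 1 : ℝ) * X - 1) * f - 2 * X * (X + 1) * derivative f
      = C (2 * N + 1 : ℝ) * (X * f) - f - 2 * (X * (X * derivative f) + X * derivative f) by ring]
  ext k
  simp only [coeff_sub, coeff_C_mul, coeff_ofNat_mul, coeff_add]
  rcases k with _ | k
  · simp [f, coeff_narayanaP, coeff_redNarayana, narayanaD, narayanaNum, Nat.cast_add_one_ne_zero]
  · simp only [coeff_X_mul, coeff_narayanaP N.succ_pos, coeff_derivative, f, coeff_redNarayana]
    rcases k with _ | k
    · simp only [coeff_X_zero, mul_coeff_zero, zero_mul]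
      linear_combination hcoeff 0
    · simp only [coeff_X_mul, coeff_derivative, coeff_redNarayana]
      linear_combination (norm := (push_cast; ring)) hcoeff (k + 1)

theorem odd_mul_eval_neg_one_redNarayana (m : ℕ) :
    ((2 * m + 1 : ℕ) : ℝ) * (redNarayana (2 * m + 1)).eval (-1)
      = (-1) ^ m * (2 * m + 1).choose m := by
  set n := 2 * m + 1
  have hsum : (n : ℝ) * (redNarayana n).eval (-1)
      = ∑ j ∈ range n, (-1) ^ j * ((n.choose (j + 1) : ℝ) * n.choose j) := by
    have hn : (n : ℝ) ≠ 0 := by positivity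
    rw [redNarayana, eval_finsetSum, mul_sum]
    refine sum_congr rfl fun j _ => ?_
    simp only [eval_mul, eval_C, eval_pow, eval_X, narayanaNum, Nat.add_sub_cancel]
    field_simp
  have hcoeff : ((X + 1 : ℝ[X]) ^ n * (1 - X) ^ n).coeff (2 * m)
      = ∑ j ∈ range n, (-1) ^ j * ((n.choose (j + 1) : ℝ) * n.choose j) := by
    rw [coeff_mul, ← Nat.sum_antidiagonal_swap]
    simp only [Prod.fst_swap, Prod.snd_swap]
    rw [Nat.sum_antidiagonal_eq_sum_range_succ
      (fun i j => ((X + 1 : ℝ[X]) ^ n).coeff j * ((1 - X : ℝ[X]) ^ n).coeff i)]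
    refine sum_congr rfl fun j hj => ?_
    have hj : j + 1 ≤ n := mem_range.mp hj
    rw [coeff_X_add_one_pow, coeff_one_sub_X_pow, ← Nat.choose_symm hj,
      show n - (j + 1) = 2 * m - j by omega]
    ring
  rw [hsum, ← hcoeff, ← mul_pow, show (X + 1 : ℝ[X]) * (1 - X) = 1 - X ^ 2 by ring,
    coeff_one_sub_X_sq_pow]

theorem eval_neg_one_redNarayana_ne_zero {n : ℕ} (hn : Odd n) :
    (redNarayana n).eval (-1) ≠ 0 := by
  obtain ⟨m, rfl⟩ := hn
  intro h
  have := odd_mul_eval_neg_one_redNarayana m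
  rw [h, mul_zero, eq_comm] at this
  exact mul_ne_zero (pow_ne_zero _ (by norm_num))
    (Nat.cast_ne_zero.mpr (Nat.choose_pos (by omega)).ne') this

theorem eval_redNarayana_pos (N : ℕ) {r : ℝ} (hr : 0 ≤ r) : 0 < (redNarayana (N + 1)).eval r := by
  rw [redNarayana, eval_finsetSum]
  refine sum_pos' (fun j _ => ?_) ⟨0, mem_range.mpr N.succ_pos, ?_⟩
  · simp only [eval_mul, eval_C, eval_pow, eval_X, narayanaNum]
    positivity
  · simp [narayanaNum, Nat.cast_add_one_ne_zero]

theorem neg_mul_eval_X_add_one_mul_narayanaP_pos (N : ℕ) {u ε : ℝ}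
    (hroot : (redNarayana (N + 1)).eval u = 0) (hu : u ≠ -1)
    (hε : 0 < ε * (derivative (redNarayana (N + 1))).eval u) :
    0 < -ε * ((X + 1) * narayanaP (N + 1)).eval u := by
  have hneg : u < 0 := lt_of_not_ge fun h => (eval_redNarayana_pos N h).ne' hroot
  have hid := congrArg (eval u) (X_sub_one_mul_narayanaP N)
  simp only [eval_mul, eval_sub, eval_add, eval_X, eval_one, eval_C, eval_ofNat, hroot,
    mul_zero, zero_sub] at hid
  have hsq : 0 < (u + 1) ^ 2 := by
    have : u + 1 ≠ 0 := fun h => hu (by linarith)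
    positivity
  have key : (1 - u) * (-ε * ((u + 1) * (narayanaP (N + 1)).eval u))
      = (-2 * u) * (u + 1) ^ 2 * (ε * (derivative (redNarayana (N + 1))).eval u) := by
    linear_combination ε * (u + 1) * hid
  simp only [eval_mul, eval_add, eval_X, eval_one]
  refine pos_of_mul_pos_right (key ▸ ?_) (by linarith : (0 : ℝ) ≤ 1 - u)
  exact mul_pos (mul_pos (by linarith) hsq) hε

theorem neg_one_pow_mul_eval_X_add_one_mul_narayanaP_pos {N : ℕ} {u : ℕ → ℝ}
    (hu : StrictMonoOn u (Set.Iio N)) (hroot : ∀ i < N, (redNarayana (N + 1)).eval (u i) = 0)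
    (hne : ∀ i < N, u i ≠ -1) :
    ∀ i < N, 0 < (-1) ^ (N - i) * ((X + 1) * narayanaP (N + 1)).eval (u i) := by
  intro i hi
  have hnodal : redNarayana (N + 1) = nodal (range N) u :=
    (monic_redNarayana N).eq_nodal (by rw [natDegree_redNarayana, card_range])
      (hu.injOn.mono (by simp)) fun j hj => hroot j (mem_range.mp hj)
  have := neg_mul_eval_X_add_one_mul_narayanaP_pos N (hroot i hi) (hne i hi)
    (hnodal ▸ neg_one_pow_mul_eval_derivative_nodal_pos hu hi)
  rwa [show N - i = N - 1 - i + 1 by omega, pow_succ, mul_neg_one]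

theorem eval_neg_one_narayanaP (N : ℕ) :
    (narayanaP (N + 1)).eval (-1) = (N + 1) * (redNarayana (N + 1)).eval (-1) := by
  have h := congrArg (eval (-1)) (X_sub_one_mul_narayanaP N)
  simp only [eval_mul, eval_sub, eval_add, eval_X, eval_one, eval_C, eval_ofNat] at h
  linarith

theorem monic_X_add_one_mul_narayanaP (N : ℕ) : ((X + 1) * narayanaP (N + 1)).Monic := by
  simpa using (monic_X_add_C (1 : ℝ)).mul (monic_narayanaP N)

theorem natDegree_X_add_one_mul_narayanaP (N : ℕ) :
    ((X + 1) * narayanaP (N + 1)).natDegree = N + 1 := by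
  rw [← C_1, (monic_X_add_C 1).natDegree_mul (monic_narayanaP N), natDegree_X_add_C,
    natDegree_narayanaP, add_comm]

theorem stmt_15_general (n : ℕ) (hodd : Odd n)
    (u : ℕ → ℝ)
    (hu : ∀ i j : ℕ, i < j → j < n - 1 → u i < u j)
    (huroots : ∀ r : ℝ, (redNarayana n).eval r = 0 ↔ ∃ i < n - 1, u i = r) :
    (narayanaP n).eval (-1) ≠ 0 ∧
    (∃ s : ℕ → ℝ, (∀ i j : ℕ, i < j → j < n - 1 → s i < s j) ∧
      (∀ r : ℝ, (narayanaP n).eval r = 0 ↔ ∃ i < n - 1, s i = r)) ∧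
    (∃ w : ℕ → ℝ, (∀ i j : ℕ, i < j → j < n → w i < w j) ∧
      (∀ r : ℝ, (r = -1 ∨ (narayanaP n).eval r = 0) ↔ ∃ i < n, w i = r) ∧
      (∀ i < n - 1, w i < u i) ∧ (∀ i < n - 1, u i < w (i + 1))) := by
  obtain ⟨m, rfl⟩ := hodd
  simp only [Nat.add_sub_cancel] at hu huroots ⊢
  have hu_mono : StrictMonoOn u (Set.Iio (2 * m)) := fun i hi j hj hij => hu i j hij hj
  have hu_root : ∀ i < 2 * m, (redNarayana (2 * m + 1)).eval (u i) = 0 :=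
    fun i hi => (huroots _).mpr ⟨i, hi, rfl⟩
  have hneg_one := eval_neg_one_redNarayana_ne_zero ⟨m, rfl⟩
  have hP : (narayanaP (2 * m + 1)).eval (-1) ≠ 0 := by
    rw [eval_neg_one_narayanaP]; exact mul_ne_zero (by positivity) hneg_one
  obtain ⟨w, hw_mono, hw_roots, hwu⟩ := exists_interlacing_roots
    (natDegree_X_add_one_mul_narayanaP _)
    ((monic_X_add_one_mul_narayanaP _).leadingCoeff ▸ one_pos) hu_mono
    (neg_one_pow_mul_eval_X_add_one_mul_narayanaP_pos hu_mono hu_root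
      fun i hi h => hneg_one (h ▸ hu_root i hi))
  have hQ_roots : ∀ r, ((X + 1) * narayanaP (2 * m + 1)).eval r = 0 ↔
      r = -1 ∨ (narayanaP (2 * m + 1)).eval r = 0 := by
    simp [add_eq_zero_iff_eq_neg]
  obtain ⟨s, hs_mono, hs_roots⟩ :=
    hw_mono.exists_enum_erase ((hw_roots (-1)).mp ((hQ_roots (-1)).mpr (Or.inl rfl)))
  refine ⟨hP, ⟨s, fun i j hij hj => hs_mono (show i < 2 * m by omega) hj hij, fun r => ?_⟩,
    ⟨w, fun i j hij hj => hw_mono (show i < 2 * m + 1 by omega) hj hij,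
      fun r => (hQ_roots r).symm.trans (hw_roots r), fun i hi => (hwu i hi).1,
      fun i hi => (hwu i hi).2⟩⟩
  rw [← hs_roots, ← hw_roots, hQ_roots]
  exact ⟨fun h => ⟨fun hr => hP (hr ▸ h), Or.inr h⟩, fun ⟨hr, h⟩ => h.resolve_left hr⟩

/-- for odd `n ≥ 3`, `𝒫_n` has `n−1` real simple zeros, `𝒫_n(−1) ≠ 0`,
and `−1` together with the zeros of `𝒫_n` (arranged ascending as `w 0 < … < w (n-1)`)
interlaces with the zeros `u 0 < … < u (n-2)` of `𝒩_n`: `(x+1)𝒫_n(x) ≺ 𝒩_n(x)`. -/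
theorem stmt_15 (n : ℕ) (hn : 3 ≤ n) (hodd : Odd n)
    (u : ℕ → ℝ)
    (hu : ∀ i j : ℕ, i < j → j < n - 1 → u i < u j)
    (huroots : ∀ r : ℝ, (redNarayana n).eval r = 0 ↔ ∃ i < n - 1, u i = r) :
    (narayanaP n).eval (-1) ≠ 0 ∧
    (∃ s : ℕ → ℝ, (∀ i j : ℕ, i < j → j < n - 1 → s i < s j) ∧
      (∀ r : ℝ, (narayanaP n).eval r = 0 ↔ ∃ i < n - 1, s i = r)) ∧
    (∃ w : ℕ → ℝ, (∀ i j : ℕ, i < j → j < n → w i < w j) ∧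
      (∀ r : ℝ, (r = -1 ∨ (narayanaP n).eval r = 0) ↔ ∃ i < n, w i = r) ∧
      (∀ i < n - 1, w i < u i) ∧ (∀ i < n - 1, u i < w (i + 1))) :=
  stmt_15_general n hodd u hu huroots
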